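/- In the formal power series ring R⟦x,y,t⟧, the generating function S(t,x,y) := ∑_{r≥0} ∑_{n≥k≥0} B^r_{n+r,k+r} x^n y^r t^k/(n!·r!) factorizes as S(t,x,y) = S^•(xt,x,y) · Z(x,t), where S^•(xt,x,y) := ∑_{n,r,k≥0} ∂^n(a_1^r b_1^k) · x^{n+k} y^r t^k/(n!·r!·k!) and Z(x,t) := exp( −t·∑_{i≥2} ((i−1)/i!)·b_i x^i ). -/

import Mathlib

noncomputable section

/-- `R = ℚ[a_1,a_2,…;b_1,b_2,…]`, realized as the polynomial ring over `ℚ` with variables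
`X (true, i) = a_i` and `X (false, i) = b_i`. -/
abbrev RR : Type := MvPolynomial (Bool × ℕ) ℚ

/-- the variable `a_i` -/
def va (i : ℕ) : RR := MvPolynomial.X (true, i)
/-- the variable `b_i` -/
def vb (i : ℕ) : RR := MvPolynomial.X (false, i)

/-- the derivation `∂` of `R` with `∂ a_i = a_{i+1}` and `∂ b_i = b_{i+1}` -/
def del : RR → RR :=
  fun p => MvPolynomial.mkDerivation ℚ (fun s : Bool × ℕ => MvPolynomial.X (s.1, s.2 + 1)) p

/-- coefficientwise extension of a map on coefficients to `A[t]` (i.e. `∂` with `∂ t = 0`) -/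
def polyLift {A : Type*} [Semiring A] (D : A → A) (p : Polynomial A) : Polynomial A :=
  p.sum fun i c => Polynomial.C (D c) * Polynomial.X ^ i

/-- the map `E : R[t] → R[t]`, `E(p) = t·b_1·p + ∂(p)` -/
def EOp (p : Polynomial RR) : Polynomial RR :=
  Polynomial.C (vb 1) * Polynomial.X * p + polyLift del p

/-- the partial `r`-Bell polynomial `B^r_{n+r,k+r}`: the coefficient of `t^k` in `E^n(a_1^r)` -/
def rBell (n k r : ℕ) : RR := (EOp^[n] (Polynomial.C (va 1 ^ r))).coeff k

/-- Exponential of a formal multivariate power series (intended for series with zero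
constant term): `exp(u) = ∑_{j≥0} u^j/j!`; for a series `u` of positive order only the
terms with `j ≤ |d|` contribute to the coefficient of a monomial of total degree `|d|`. -/
def sexp {σ : Type*} {A : Type*} [Ring A] [Algebra ℚ A] (u : MvPowerSeries σ A) :
    MvPowerSeries σ A :=
  fun d => MvPowerSeries.coeff d
    (∑ j ∈ Finset.range (d.sum (fun _ m => m) + 1), (j.factorial : ℚ)⁻¹ • u ^ j)

/-- The generating series `S(t,x,y) = ∑_{r≥0} ∑_{n≥k≥0} B^r_{n+r,k+r} x^n y^r t^k/(n!·r!)`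
in `R⟦x,y,t⟧` (coordinates `0 ↦ x`, `1 ↦ y`, `2 ↦ t`). -/
def Sgen : MvPowerSeries (Fin 3) RR :=
  fun d => if d 2 ≤ d 0 then
    (((d 0).factorial * (d 1).factorial : ℚ))⁻¹ • rBell (d 0) (d 2) (d 1)
  else 0

/-- The series `S^•(xt,x,y) = ∑_{n,r,k≥0} ∂^n(a_1^r b_1^k)·x^{n+k} y^r t^k/(n!·r!·k!)`
in `R⟦x,y,t⟧`: the coefficient of `x^α y^β t^γ` is `∂^{α-γ}(a_1^β b_1^γ)/((α-γ)!·β!·γ!)`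
when `γ ≤ α`, and `0` otherwise. -/
def Sbul : MvPowerSeries (Fin 3) RR :=
  fun d => if d 2 ≤ d 0 then
    (((d 0 - d 2).factorial * (d 1).factorial * (d 2).factorial : ℚ))⁻¹ •
      del^[d 0 - d 2] (va 1 ^ d 1 * vb 1 ^ d 2)
  else 0

/-- the series `−t·∑_{i≥2} ((i−1)/i!)·b_i x^i` in `R⟦x,y,t⟧` -/
def Zarg : MvPowerSeries (Fin 3) RR :=
  fun d => if d 1 = 0 ∧ d 2 = 1 ∧ 2 ≤ d 0 then
    (-(((d 0 : ℚ) - 1) / ((d 0).factorial : ℚ))) • vb (d 0)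
  else 0

/-!
Both sides satisfy the linear equation `∂ₓF = ∂F + t·b₁·F`, where `∂` acts on coefficients.
For `S` this is the recursion `B(n+1, k+1) = b₁·B(n, k) + ∂B(n, k+1)` coming from `E`. For the
product, write `Z = exp ζ`; it follows from `∂ₓS• = ∂S• + t·H·S•` and `∂ζ = ∂ₓζ + t·H − t·b₁`,
where `H = ∑ₘ b_{m+1} xᵐ/m!` is the Taylor series of `b₁` along `∂`; the first identity is the
Leibniz rule for `∂ⁿ(a₁ʳ b₁ᵏ · b₁)`. An equation of this form determines a series from its `x⁰`
part, and at `x = 0` both sides reduce to `∑ a₁ʳ yʳ/r!`.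
-/

open MvPowerSeries Finset
open scoped Nat

namespace Derivation

variable {R A : Type*} [CommSemiring R] [CommSemiring A] [Algebra R A]

theorem iterate_map_mul (D : Derivation R A A) (n : ℕ) (a b : A) :
    D^[n] (a * b) = ∑ ij ∈ antidiagonal n, n.choose ij.1 • (D^[ij.1] a * D^[ij.2] b) := by
  induction n with
  | zero => simp
  | succ n ih =>
    rw [sum_antidiagonal_choose_succ_nsmul (fun i j => D^[i] a * D^[j] b) n]
    simp only [Function.iterate_succ_apply', ih, map_sum, map_nsmul, leibniz, smul_eq_mul,
      smul_add, sum_add_distrib]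
    congr 1
    refine sum_congr rfl fun ij hij => ?_
    rw [n.choose_symm_of_eq_add (mem_antidiagonal.1 hij).symm, mul_comm]

theorem inv_factorial_smul_iterate_map_mul [Algebra ℚ A] (D : Derivation R A A) (n : ℕ)
    (a b : A) : (n ! : ℚ)⁻¹ • D^[n] (a * b) =
      ∑ ij ∈ antidiagonal n, ((ij.1 ! : ℚ)⁻¹ • D^[ij.1] a) * ((ij.2 ! : ℚ)⁻¹ • D^[ij.2] b) := by
  rw [iterate_map_mul, smul_sum]
  refine sum_congr rfl fun ij hij => ?_
  obtain ⟨i, j⟩ := ij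
  obtain rfl : i + j = n := mem_antidiagonal.1 hij
  rw [← Nat.cast_smul_eq_nsmul ℚ, smul_smul, smul_mul_smul_comm]
  congr 1
  have := Nat.choose_mul_factorial_mul_factorial (Nat.le_add_right i j)
  rw [Nat.add_sub_cancel_left] at this
  field_simp
  exact_mod_cast this

end Derivation

namespace MvPowerSeries

variable {σ A : Type*}

theorem coeff_mul_congr_right [Semiring A] {d : σ →₀ ℕ} (f : MvPowerSeries σ A)
    {g g' : MvPowerSeries σ A} (h : ∀ e ≤ d, coeff e g = coeff e g') :
    coeff d (f * g) = coeff d (f * g') := by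
  classical
  simp only [coeff_mul]
  exact sum_congr rfl fun p hp => by rw [h p.2 (mem_antidiagonal.1 hp ▸ le_add_self)]

theorem coeff_mul_eq_zero_of_coeff_eq_zero [Semiring A] {i : σ} {f : MvPowerSeries σ A}
    (hf : ∀ e, e i = 0 → coeff e f = 0) (g : MvPowerSeries σ A) {d : σ →₀ ℕ} (hd : d i = 0) :
    coeff d (f * g) = 0 := by
  classical
  rw [coeff_mul]
  refine sum_eq_zero fun p hp => ?_
  have : p.1 i + p.2 i = d i := by rw [← Finsupp.add_apply, mem_antidiagonal.1 hp]
  rw [hf p.1 (by omega), zero_mul]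

theorem le_order_pderiv [CommSemiring A] (i : σ) {f : MvPowerSeries σ A} {n : ℕ}
    (hf : ((n + 1 : ℕ) : ℕ∞) ≤ f.order) : (n : ℕ∞) ≤ (pderiv A i f).order :=
  le_order fun d hd => by
    have hd : d.degree < n := by exact_mod_cast hd
    rw [coeff_pderiv, coeff_of_lt_order, zero_mul]
    rw [map_add, Finsupp.degree_single]
    exact lt_of_lt_of_le (by exact_mod_cast Nat.succ_lt_succ hd) hf

section mapDerivation

variable {R : Type*} [CommSemiring R]

def mapDerivation [CommSemiring A] [Algebra R A] (D : Derivation R A A) :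
    Derivation R (MvPowerSeries σ A) (MvPowerSeries σ A) where
  toFun f d := D (coeff d f)
  map_add' f g := by ext d; exact D.map_add _ _
  map_smul' r f := by ext d; exact D.map_smul _ _
  map_one_eq_zero' := by
    classical
    ext d
    change D (coeff d 1) = 0
    rw [coeff_one]
    split_ifs <;> simp
  leibniz' f g := by
    classical
    ext d
    rw [smul_eq_mul, smul_eq_mul, map_add, mul_comm g]
    change D (coeff d (f * g)) = _
    rw [coeff_mul, coeff_mul, coeff_mul, map_sum, ← sum_add_distrib]
    exact sum_congr rfl fun p _ => by
      rw [Derivation.leibniz, smul_eq_mul, smul_eq_mul, mul_comm (coeff p.2 g)]; rfl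

@[simp]
theorem coeff_mapDerivation [CommSemiring A] [Algebra R A] (D : Derivation R A A)
    (f : MvPowerSeries σ A) (d : σ →₀ ℕ) : coeff d (mapDerivation D f) = D (coeff d f) :=
  rfl

theorem order_le_order_mapDerivation [CommSemiring A] [Algebra R A] (D : Derivation R A A)
    (f : MvPowerSeries σ A) : f.order ≤ (mapDerivation D f).order :=
  le_order fun d hd => by rw [coeff_mapDerivation, coeff_of_lt_order hd, map_zero]

theorem eq_of_pderiv_eq_mapDerivation_add_mul [CommRing A] [IsAddTorsionFree A] [Algebra R A]
    (D : Derivation R A A) (i : σ) (T : MvPowerSeries σ A) {F G : MvPowerSeries σ A}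
    (hF : pderiv A i F = mapDerivation D F + T * F)
    (hG : pderiv A i G = mapDerivation D G + T * G)
    (h0 : ∀ d, d i = 0 → coeff d F = coeff d G) : F = G := by
  suffices h : ∀ n d, d i ≤ n → coeff d F = coeff d G from ext fun d => h _ d le_rfl
  intro n
  induction n with
  | zero => exact fun d hd => h0 d (Nat.le_zero.mp hd)
  | succ n ih =>
    intro d hd
    rcases Nat.lt_or_ge (d i) (n + 1) with hlt | hge
    · exact ih d (by omega)
    obtain ⟨e, rfl⟩ : ∃ e, d = e + Finsupp.single i 1 :=
      ⟨d - Finsupp.single i 1, (tsub_add_cancel_of_le (Finsupp.single_le_iff.mpr (by omega))).symm⟩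
    have hei : e i = n := by simp at hd hge; omega
    have hF' := congr(coeff e $hF)
    have hG' := congr(coeff e $hG)
    rw [coeff_pderiv, map_add, coeff_mapDerivation, hei] at hF' hG'
    rw [ih e hei.le, coeff_mul_congr_right T fun e' he' => ih e' ((he' i).trans hei.le),
      ← hG', ← Nat.cast_succ, ← nsmul_eq_mul', ← nsmul_eq_mul'] at hF'
    exact_mod_cast nsmul_right_injective n.succ_ne_zero hF'

end mapDerivation

section Exp

variable [CommRing A] [Algebra ℚ A]

def expPartialSum (u : MvPowerSeries σ A) (N : ℕ) : MvPowerSeries σ A :=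
  ∑ j ∈ range (N + 1), (j ! : ℚ)⁻¹ • u ^ j

theorem coeff_sexp (u : MvPowerSeries σ A) (d : σ →₀ ℕ) :
    coeff d (sexp u) = coeff d (expPartialSum u d.degree) :=
  rfl

theorem coeff_expPartialSum_of_degree_le {u : MvPowerSeries σ A} (hu : constantCoeff u = 0)
    {d : σ →₀ ℕ} {N : ℕ} (hN : d.degree ≤ N) :
    coeff d (expPartialSum u N) = coeff d (sexp u) := by
  rw [coeff_sexp, expPartialSum, expPartialSum,
    ← sum_range_add_sum_Ico _ (Nat.succ_le_succ hN), map_add, add_eq_left, map_sum]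
  refine sum_eq_zero fun j hj => ?_
  have hdj : (d.degree : ℕ∞) < j := by exact_mod_cast (mem_Ico.1 hj).1
  rw [map_rat_smul, coeff_of_lt_order (hdj.trans_le (le_order_pow_of_constantCoeff_eq_zero j hu)),
    smul_zero]

theorem le_order_sexp_sub_expPartialSum {u : MvPowerSeries σ A} (hu : constantCoeff u = 0)
    (N : ℕ) : ((N + 1 : ℕ) : ℕ∞) ≤ (sexp u - expPartialSum u N).order :=
  le_order fun d hd => by
    have hd : d.degree < N + 1 := by exact_mod_cast hd
    rw [map_sub, coeff_expPartialSum_of_degree_le hu (Nat.lt_succ_iff.1 hd), sub_self]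

theorem coeff_sexp_of_apply_eq_zero {i : σ} {u : MvPowerSeries σ A}
    (hu : ∀ e, e i = 0 → coeff e u = 0) {d : σ →₀ ℕ} (hd : d i = 0) :
    coeff d (sexp u) = coeff d 1 := by
  rw [coeff_sexp, expPartialSum, map_sum, sum_range_succ', sum_eq_zero, zero_add, pow_zero,
    Nat.factorial_zero, Nat.cast_one, inv_one, one_smul]
  intro j _
  rw [map_rat_smul, pow_succ', coeff_mul_eq_zero_of_coeff_eq_zero hu _ hd, smul_zero]

variable {R : Type*} [CommSemiring R] [Algebra R A]

theorem derivation_expPartialSum_succ (D : Derivation R (MvPowerSeries σ A) (MvPowerSeries σ A))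
    (u : MvPowerSeries σ A) (N : ℕ) : D (expPartialSum u (N + 1)) = expPartialSum u N * D u := by
  rw [expPartialSum, map_sum, sum_range_succ', pow_zero, map_rat_smul, D.map_one_eq_zero,
    smul_zero, add_zero, expPartialSum, sum_mul]
  refine sum_congr rfl fun j _ => ?_
  rw [map_rat_smul, D.leibniz_pow, Nat.add_sub_cancel, smul_eq_mul, smul_mul_assoc,
    ← Nat.cast_smul_eq_nsmul ℚ, smul_smul, Nat.factorial_succ]
  congr 1
  push_cast
  field_simp

theorem derivation_sexp (D : Derivation R (MvPowerSeries σ A) (MvPowerSeries σ A))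
    (hD : ∀ (f : MvPowerSeries σ A) (n : ℕ), ((n + 1 : ℕ) : ℕ∞) ≤ f.order → (n : ℕ∞) ≤ (D f).order)
    {u : MvPowerSeries σ A} (hu : constantCoeff u = 0) : D (sexp u) = D u * sexp u := by
  ext d
  have hlocal : coeff d (D (sexp u)) = coeff d (D (expPartialSum u (d.degree + 1))) := by
    rw [← sub_eq_zero, ← map_sub, ← map_sub]
    refine coeff_of_lt_order (lt_of_lt_of_le ?_ (hD _ _ (le_order_sexp_sub_expPartialSum hu _)))
    exact_mod_cast Nat.lt_succ_self _
  rw [hlocal, derivation_expPartialSum_succ, mul_comm _ (D u)]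
  exact coeff_mul_congr_right _ fun e he =>
    coeff_expPartialSum_of_degree_le hu (Finsupp.degree_mono he)

end Exp

end MvPowerSeries
def delDerivation : Derivation ℚ RR RR :=
  MvPolynomial.mkDerivation ℚ fun s : Bool × ℕ => MvPolynomial.X (s.1, s.2 + 1)

theorem del_eq_delDerivation : del = ⇑delDerivation :=
  rfl

theorem del_vb (i : ℕ) : del (vb i) = vb (i + 1) :=
  MvPolynomial.mkDerivation_X ℚ _ _

theorem iterate_del_vb (m i : ℕ) : del^[m] (vb i) = vb (i + m) := by
  induction m with
  | zero => rfl
  | succ m ih => rw [Function.iterate_succ_apply', ih, del_vb, add_assoc]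

theorem polyLift_coeff {A : Type*} [Semiring A] {D : A → A} (hD : D 0 = 0)
    (p : Polynomial A) (k : ℕ) : (polyLift D p).coeff k = D (p.coeff k) := by
  rw [polyLift, Polynomial.sum_def, Polynomial.finsetSum_coeff]
  simp_rw [Polynomial.coeff_C_mul_X_pow]
  rw [sum_ite_eq]
  split_ifs with hk
  · rfl
  · rw [Polynomial.notMem_support_iff.1 hk, hD]

theorem rBell_zero (k r : ℕ) : rBell 0 k r = if k = 0 then va 1 ^ r else 0 :=
  Polynomial.coeff_C

theorem rBell_succ_zero (n r : ℕ) : rBell (n + 1) 0 r = del (rBell n 0 r) := by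
  rw [rBell, Function.iterate_succ_apply', EOp, Polynomial.coeff_add, mul_assoc,
    Polynomial.coeff_C_mul, Polynomial.coeff_X_mul_zero, mul_zero, zero_add,
    polyLift_coeff (D := del) (map_zero delDerivation)]
  rfl

theorem rBell_succ_succ (n k r : ℕ) :
    rBell (n + 1) (k + 1) r = vb 1 * rBell n k r + del (rBell n (k + 1) r) := by
  rw [rBell, Function.iterate_succ_apply', EOp, Polynomial.coeff_add, mul_assoc,
    Polynomial.coeff_C_mul, Polynomial.coeff_X_mul,
    polyLift_coeff (D := del) (map_zero delDerivation)]
  rfl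

theorem rBell_eq_zero_of_lt {n k : ℕ} (r : ℕ) (h : n < k) : rBell n k r = 0 := by
  induction n generalizing k with
  | zero => rw [rBell_zero, if_neg (by omega)]
  | succ n ih =>
    obtain ⟨k, rfl⟩ : ∃ k', k = k' + 1 := ⟨k - 1, by omega⟩
    rw [rBell_succ_succ, ih (by omega), ih (by omega), mul_zero, del_eq_delDerivation, map_zero,
      add_zero]

def xyt (α β γ : ℕ) : Fin 3 →₀ ℕ :=
  Finsupp.single 0 α + Finsupp.single 1 β + Finsupp.single 2 γ

@[simp] theorem xyt_apply_zero (α β γ : ℕ) : xyt α β γ 0 = α := by simp [xyt]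
@[simp] theorem xyt_apply_one (α β γ : ℕ) : xyt α β γ 1 = β := by simp [xyt]
@[simp] theorem xyt_apply_two (α β γ : ℕ) : xyt α β γ 2 = γ := by simp [xyt]

theorem xyt_ext_iff {d e : Fin 3 →₀ ℕ} : d = e ↔ d 0 = e 0 ∧ d 1 = e 1 ∧ d 2 = e 2 := by
  refine ⟨by rintro rfl; simp, fun ⟨h0, h1, h2⟩ => Finsupp.ext fun i => ?_⟩
  fin_cases i <;> assumption

theorem exists_eq_xyt (d : Fin 3 →₀ ℕ) : ∃ α β γ, d = xyt α β γ :=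
  ⟨d 0, d 1, d 2, xyt_ext_iff.2 (by simp)⟩

theorem xyt_le_iff {α β γ α' β' γ' : ℕ} :
    xyt α β γ ≤ xyt α' β' γ' ↔ α ≤ α' ∧ β ≤ β' ∧ γ ≤ γ' := by
  refine ⟨fun h => ⟨by simpa using h 0, by simpa using h 1, by simpa using h 2⟩,
    fun ⟨h0, h1, h2⟩ i => ?_⟩
  fin_cases i <;> simpa

theorem xyt_add (α β γ α' β' γ' : ℕ) :
    xyt α β γ + xyt α' β' γ' = xyt (α + α') (β + β') (γ + γ') :=
  xyt_ext_iff.2 (by simp)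

theorem xyt_sub (α β γ α' β' γ' : ℕ) :
    xyt α β γ - xyt α' β' γ' = xyt (α - α') (β - β') (γ - γ') :=
  xyt_ext_iff.2 (by simp)

local notation "PS" => MvPowerSeries (Fin 3) RR

theorem coeff_xyt_pderiv (F : PS) (α β γ : ℕ) :
    coeff (xyt α β γ) (pderiv RR 0 F) = ((α + 1 : ℕ) : ℚ) • coeff (xyt (α + 1) β γ) F := by
  rw [coeff_pderiv, show Finsupp.single (0 : Fin 3) 1 = xyt 1 0 0 from xyt_ext_iff.2 (by simp),
    xyt_add, xyt_apply_zero, Algebra.smul_def, map_natCast, mul_comm]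
  push_cast
  rfl

theorem coeff_xyt_monomial_t_mul (a : RR) (F : PS) (α β γ : ℕ) :
    coeff (xyt α β (γ + 1)) (monomial (xyt 0 0 1) a * F) = a * coeff (xyt α β γ) F := by
  rw [coeff_monomial_mul, if_pos (xyt_le_iff.2 (by omega)), xyt_sub]
  simp

theorem coeff_xyt_zero_monomial_t_mul (a : RR) (F : PS) (α β : ℕ) :
    coeff (xyt α β 0) (monomial (xyt 0 0 1) a * F) = 0 := by
  rw [coeff_monomial_mul, if_neg (fun h => by simpa using (xyt_le_iff.1 h).2.2)]

theorem coeff_Sgen (α β γ : ℕ) :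
    coeff (xyt α β γ) Sgen = ((α ! * β ! : ℚ))⁻¹ • rBell α γ β := by
  rw [coeff_apply, Sgen]
  simp only [xyt_apply_zero, xyt_apply_one, xyt_apply_two]
  split_ifs with h
  · rfl
  · rw [rBell_eq_zero_of_lt _ (by omega), smul_zero]

def tB1 : PS := monomial (xyt 0 0 1) (vb 1)

theorem pderiv_Sgen : pderiv RR 0 Sgen = mapDerivation delDerivation Sgen + tB1 * Sgen := by
  ext d : 1
  obtain ⟨α, β, γ, rfl⟩ := exists_eq_xyt d
  have hfac : ((α + 1 : ℕ) : ℚ) * (((α + 1)! * β ! : ℚ))⁻¹ = ((α ! * β ! : ℚ))⁻¹ := by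
    rw [Nat.factorial_succ]; push_cast; field_simp
  rw [coeff_xyt_pderiv, map_add, coeff_mapDerivation, coeff_Sgen, coeff_Sgen, smul_smul, hfac,
    map_rat_smul, ← del_eq_delDerivation]
  rcases γ with _ | γ
  · rw [tB1, coeff_xyt_zero_monomial_t_mul, add_zero, rBell_succ_zero]
  · rw [tB1, coeff_xyt_monomial_t_mul, coeff_Sgen, rBell_succ_succ, smul_add, mul_smul_comm,
      add_comm]

-- the series `H = ∑ₘ ∂ᵐ(b₁) xᵐ/m!` of the header
def taylorB1 : PS :=
  fun d => if d 1 = 0 ∧ d 2 = 0 then ((d 0)! : ℚ)⁻¹ • vb (d 0 + 1) else 0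

theorem coeff_xyt_taylorB1_mul (F : PS) (α β γ : ℕ) :
    coeff (xyt α β γ) (taylorB1 * F) =
      ∑ m ∈ range (α + 1), ((m ! : ℚ)⁻¹ • vb (m + 1)) * coeff (xyt (α - m) β γ) F := by
  classical
  have hsub : (range (α + 1)).image (fun m => (xyt m 0 0, xyt (α - m) β γ)) ⊆
      antidiagonal (xyt α β γ) := by
    intro p hp
    obtain ⟨m, hm, rfl⟩ := mem_image.1 hp
    rw [HasAntidiagonal.mem_antidiagonal, xyt_add]
    simp only [mem_range] at hm
    congr 1 <;> omega
  rw [coeff_mul, ← sum_subset hsub, sum_image]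
  · refine sum_congr rfl fun m _ => ?_
    simp [coeff_apply, taylorB1]
  · intro m _ m' _ h
    simpa using congr(($h).1 0)
  · intro p hp hp'
    rw [coeff_apply taylorB1, taylorB1]
    split_ifs with h
    · refine absurd (mem_image.2 ⟨p.1 0, ?_⟩) hp'
      have := HasAntidiagonal.mem_antidiagonal.1 hp
      rw [xyt_ext_iff] at this
      simp only [Finsupp.add_apply, xyt_apply_zero, xyt_apply_one, xyt_apply_two] at this
      refine ⟨mem_range.2 (by omega), Prod.ext ?_ ?_⟩ <;>
        rw [xyt_ext_iff] <;> simp <;> omega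
    · rw [zero_mul]

theorem coeff_Sbul (n β γ : ℕ) : coeff (xyt (n + γ) β γ) Sbul =
    ((n ! * β ! * γ ! : ℚ))⁻¹ • del^[n] (va 1 ^ β * vb 1 ^ γ) := by
  rw [coeff_apply, Sbul]
  simp

theorem coeff_Sbul_of_lt {α γ : ℕ} (β : ℕ) (h : α < γ) : coeff (xyt α β γ) Sbul = 0 := by
  rw [coeff_apply, Sbul]
  simp [h]

theorem del_coeff_Sbul (α β γ : ℕ) :
    del (coeff (xyt α β γ) Sbul) = ((α : ℚ) + 1 - γ) • coeff (xyt (α + 1) β γ) Sbul := by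
  rcases Nat.lt_or_ge α γ with h | h
  · rw [coeff_Sbul_of_lt β h, del_eq_delDerivation, map_zero]
    rcases Nat.lt_or_ge (α + 1) γ with h' | h'
    · rw [coeff_Sbul_of_lt β h', smul_zero]
    · rw [show (γ : ℚ) = α + 1 by norm_cast; omega, sub_self, zero_smul]
  · obtain ⟨n, rfl⟩ := Nat.exists_eq_add_of_le' h
    rw [show n + γ + 1 = (n + 1) + γ by ring, coeff_Sbul, coeff_Sbul, del_eq_delDerivation,
      map_rat_smul, ← del_eq_delDerivation, ← Function.iterate_succ_apply' del, smul_smul,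
      Nat.factorial_succ]
    congr 1
    push_cast
    field_simp
    ring

theorem coeff_xyt_add_taylorB1_mul_Sbul (n β γ : ℕ) :
    coeff (xyt (n + γ) β γ) (taylorB1 * Sbul) =
      ∑ m ∈ range (n + 1), ((m ! : ℚ)⁻¹ • vb (m + 1)) * coeff (xyt (n - m + γ) β γ) Sbul := by
  rw [coeff_xyt_taylorB1_mul]
  refine (sum_subset (range_subset_range.2 (by omega)) fun m hm hm' => ?_).symm.trans
    (sum_congr rfl fun m hm => ?_)
  · simp only [mem_range] at hm hm'
    rw [coeff_Sbul_of_lt β (by omega), mul_zero]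
  · simp only [mem_range] at hm
    rw [show n + γ - m = n - m + γ by omega]

-- That is, `x·H·S• = ∂ₜS•`: with `τ = exp(x∂)` the Taylor homomorphism,
-- `S• = exp(y·τ(a₁) + xt·τ(b₁))` and `H = τ(b₁)`.
theorem coeff_taylorB1_mul_Sbul (α β γ : ℕ) : coeff (xyt α β γ) (taylorB1 * Sbul) =
    ((γ : ℚ) + 1) • coeff (xyt (α + 1) β (γ + 1)) Sbul := by
  rcases Nat.lt_or_ge α γ with h | h
  · rw [coeff_xyt_taylorB1_mul, coeff_Sbul_of_lt β (by omega), smul_zero]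
    exact sum_eq_zero fun m _ => by rw [coeff_Sbul_of_lt β (by omega), mul_zero]
  obtain ⟨n, rfl⟩ := Nat.exists_eq_add_of_le' h
  rw [coeff_xyt_add_taylorB1_mul_Sbul]
  calc ∑ m ∈ range (n + 1), ((m ! : ℚ)⁻¹ • vb (m + 1)) * coeff (xyt ((n - m) + γ) β γ) Sbul
      = ((β ! * γ ! : ℚ))⁻¹ • ∑ m ∈ range (n + 1),
          ((m ! : ℚ)⁻¹ • del^[m] (vb 1)) *
            (((n - m)! : ℚ)⁻¹ • del^[n - m] (va 1 ^ β * vb 1 ^ γ)) := by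
        rw [smul_sum]
        refine sum_congr rfl fun m _ => ?_
        rw [coeff_Sbul, iterate_del_vb, add_comm 1 m, smul_mul_smul_comm, smul_mul_smul_comm,
          smul_smul]
        congr 1
        field_simp
    _ = ((β ! * γ ! : ℚ))⁻¹ • ((n ! : ℚ)⁻¹ • del^[n] (vb 1 * (va 1 ^ β * vb 1 ^ γ))) := by
        rw [del_eq_delDerivation, delDerivation.inv_factorial_smul_iterate_map_mul,
          Nat.sum_antidiagonal_eq_sum_range_succ
            (fun i j => ((i ! : ℚ)⁻¹ • delDerivation^[i] (vb 1)) *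
              ((j ! : ℚ)⁻¹ • delDerivation^[j] (va 1 ^ β * vb 1 ^ γ)))]
    _ = ((γ : ℚ) + 1) • coeff (xyt (n + γ + 1) β (γ + 1)) Sbul := by
        rw [show n + γ + 1 = n + (γ + 1) by ring, coeff_Sbul,
          show va 1 ^ β * vb 1 ^ (γ + 1) = vb 1 * (va 1 ^ β * vb 1 ^ γ) by ring,
          smul_smul, smul_smul, Nat.factorial_succ]
        congr 1
        push_cast
        field_simp

theorem pderiv_Sbul : pderiv RR 0 Sbul =
    mapDerivation delDerivation Sbul + monomial (xyt 0 0 1) 1 * taylorB1 * Sbul := by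
  ext d : 1
  obtain ⟨α, β, γ, rfl⟩ := exists_eq_xyt d
  rw [coeff_xyt_pderiv, map_add, coeff_mapDerivation, ← del_eq_delDerivation, del_coeff_Sbul,
    mul_assoc]
  rcases γ with _ | γ
  · rw [coeff_xyt_zero_monomial_t_mul, add_zero]
    push_cast
    rw [sub_zero]
  · rw [coeff_xyt_monomial_t_mul, one_mul, coeff_taylorB1_mul_Sbul, ← add_smul]
    push_cast
    ring_nf

theorem coeff_Zarg_of_ne {α β γ : ℕ} (h : ¬(β = 0 ∧ γ = 1)) : coeff (xyt α β γ) Zarg = 0 := by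
  rw [coeff_apply, Zarg]
  simp only [xyt_apply_zero, xyt_apply_one, xyt_apply_two]
  rw [if_neg (by tauto)]

theorem coeff_Zarg_of_apply_zero {d : Fin 3 →₀ ℕ} (hd : d 0 = 0) : coeff d Zarg = 0 := by
  rw [coeff_apply, Zarg]
  simp [hd]

theorem coeff_Zarg_succ (m : ℕ) :
    coeff (xyt (m + 1) 0 1) Zarg = (-((m : ℚ) / (m + 1)!)) • vb (m + 1) := by
  rw [coeff_apply, Zarg]
  rcases m with _ | m <;> simp

theorem coeff_xyt_taylorB1 (α β γ : ℕ) :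
    coeff (xyt α β γ) taylorB1 = if β = 0 ∧ γ = 0 then (α ! : ℚ)⁻¹ • vb (α + 1) else 0 := by
  rw [coeff_apply, taylorB1]
  simp

theorem coeff_tB1 (α β γ : ℕ) :
    coeff (xyt α β γ) tB1 = if α = 0 ∧ β = 0 ∧ γ = 1 then vb 1 else 0 := by
  simp [tB1, coeff_monomial, xyt_ext_iff]

theorem mapDerivation_Zarg : mapDerivation delDerivation Zarg =
    pderiv RR 0 Zarg + monomial (xyt 0 0 1) 1 * taylorB1 - tB1 := by
  ext d : 1
  obtain ⟨α, β, γ, rfl⟩ := exists_eq_xyt d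
  rw [map_sub, map_add, coeff_mapDerivation, coeff_xyt_pderiv, coeff_tB1]
  by_cases hβγ : β = 0 ∧ γ = 1
  · obtain ⟨rfl, rfl⟩ := hβγ
    rw [coeff_xyt_monomial_t_mul, one_mul, coeff_xyt_taylorB1, if_pos ⟨rfl, rfl⟩]
    rcases α with _ | m
    · simp [coeff_Zarg_of_apply_zero, coeff_Zarg_succ]
    · rw [coeff_Zarg_succ, coeff_Zarg_succ, if_neg (by omega), sub_zero, map_rat_smul,
        ← del_eq_delDerivation, del_vb, smul_smul, ← add_smul]
      congr 1
      rw [Nat.factorial_succ (m + 1)]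
      push_cast
      field_simp
      ring
  · rw [coeff_Zarg_of_ne hβγ, coeff_Zarg_of_ne hβγ, map_zero, smul_zero, zero_add,
      if_neg (by tauto)]
    rcases γ with _ | γ
    · rw [coeff_xyt_zero_monomial_t_mul, sub_zero]
    · rw [coeff_xyt_monomial_t_mul, one_mul, coeff_xyt_taylorB1, if_neg (by omega), sub_zero]

theorem coeff_xyt_zero_Sgen (β γ : ℕ) :
    coeff (xyt 0 β γ) Sgen = coeff (xyt 0 β γ) Sbul := by
  rw [coeff_Sgen, rBell_zero]
  rcases γ with _ | γ
  · rw [if_pos rfl, show xyt 0 β 0 = xyt (0 + 0) β 0 from rfl, coeff_Sbul]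
    simp
  · rw [if_neg γ.succ_ne_zero, smul_zero, coeff_Sbul_of_lt β γ.succ_pos]

/-- In `R⟦x,y,t⟧`,
`S(t,x,y) = S^•(xt,x,y) · Z(x,t)` where
`S(t,x,y) = ∑_{r≥0} ∑_{n≥k≥0} B^r_{n+r,k+r} x^n y^r t^k/(n!·r!)`,
`S^•(xt,x,y) = ∑_{n,r,k≥0} ∂^n(a_1^r b_1^k)·x^{n+k} y^r t^k/(n!·r!·k!)` and
`Z(x,t) = exp(−t·∑_{i≥2} ((i−1)/i!)·b_i x^i)`. -/
theorem stmt5 : Sgen = Sbul * sexp Zarg := by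
  have hZ : constantCoeff Zarg = 0 := by
    rw [← coeff_zero_eq_constantCoeff_apply, coeff_Zarg_of_apply_zero rfl]
  have hpderiv := derivation_sexp (pderiv RR 0) (fun _ _ => le_order_pderiv 0) hZ
  have hmap := derivation_sexp (mapDerivation delDerivation)
    (fun f n h => (Nat.cast_le.2 n.le_succ).trans (h.trans (order_le_order_mapDerivation _ f))) hZ
  refine eq_of_pderiv_eq_mapDerivation_add_mul delDerivation 0 tB1 pderiv_Sgen ?_ fun d hd => ?_
  · rw [Derivation.leibniz, Derivation.leibniz, hpderiv, hmap, pderiv_Sbul, mapDerivation_Zarg]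
    simp only [smul_eq_mul]
    ring
  · obtain ⟨α, β, γ, rfl⟩ := exists_eq_xyt d
    obtain rfl : α = 0 := by simpa using hd
    rw [coeff_mul_congr_right Sbul (g' := 1) fun e he =>
        coeff_sexp_of_apply_eq_zero (fun _ => coeff_Zarg_of_apply_zero) (by simpa using he 0),
      mul_one, coeff_xyt_zero_Sgen]
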